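/- In ℝ³ with the p-norm (1 < p < ∞, p ≠ 2), the duality map J* does not map linearly dependent triples to linearly dependent triples: taking a = (0,1,1), b = (1,0,1), c = (1,1,2) in ℓ_q³ (q = p/(p−1)), which are linearly dependent, their images under J*—namely the normalized vectors (0,1,1), (1,0,1), (1,1,2^{q−1})—are linearly independent when q ≠ 2. -/

import Mathlib

/-- The duality map `J* : ℓ_q³ → ℓ_p³`,
`J* a = ‖a‖_q⁻¹ • (|a₁|^{q-2}a₁, |a₂|^{q-2}a₂, |a₃|^{q-2}a₃)`. -/
noncomputable def Jstar (q : ℝ) (a : Fin 3 → ℝ) : Fin 3 → ℝ :=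
  ((∑ i, |a i| ^ q) ^ (1 / q))⁻¹ • fun i => |a i| ^ (q - 2) * a i

/-! Up to a nonzero normalizing factor on each vector, `J*` acts coordinatewise by
`t ↦ |t|^(q-2) t`, which fixes `0` and `1` but sends `2` to `2^(q-1)`. The rows
`(0,1,1), (1,0,1), (1,1,t)` have determinant `2 - t`, so they are dependent for `t = 2` and
independent for `t = 2^(q-1)` as soon as `q ≠ 2`. -/

open Matrix

theorem linearIndependent_smul_iff_of_ne_zero {ι K M : Type*} [Field K] [AddCommGroup M]
    [Module K M] {v : ι → M} {c : ι → K} (hc : ∀ i, c i ≠ 0) :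
    LinearIndependent K (fun i => c i • v i) ↔ LinearIndependent K v :=
  LinearIndependent.units_smul_iff v fun i => Units.mk0 (c i) (hc i)

theorem linearIndependent_vecCons_three_iff {K : Type*} [Field K] (t : K) :
    LinearIndependent K ![![0, 1, 1], ![1, 0, 1], ![1, 1, t]] ↔ t ≠ 2 := by
  let A : Matrix (Fin 3) (Fin 3) K := !![0, 1, 1; 1, 0, 1; 1, 1, t]
  have hdet : A.det = 2 - t := by
    simp [A, det_fin_three]
    ring
  change LinearIndependent K A.row ↔ _
  rw [linearIndependent_rows_iff_isUnit, isUnit_iff_isUnit_det, isUnit_iff_ne_zero, hdet,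
    sub_ne_zero, ne_comm]

theorem Jstar_normalizer_ne_zero (q : ℝ) {a : Fin 3 → ℝ} (ha : a ≠ 0) :
    ((∑ i, |a i| ^ q) ^ (1 / q))⁻¹ ≠ 0 := by
  obtain ⟨i, hi⟩ := Function.ne_iff.mp ha
  have hsum : 0 < ∑ i, |a i| ^ q :=
    Finset.sum_pos' (fun j _ => by positivity)
      ⟨i, Finset.mem_univ i, Real.rpow_pos_of_pos (abs_pos.mpr hi) q⟩
  positivity

theorem linearIndependent_Jstar_comp_iff {ι : Type*} (q : ℝ) {x : ι → Fin 3 → ℝ}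
    (hx : ∀ i, x i ≠ 0) :
    LinearIndependent ℝ (Jstar q ∘ x) ↔
      LinearIndependent ℝ fun i j => |x i j| ^ (q - 2) * x i j :=
  linearIndependent_smul_iff_of_ne_zero fun i => Jstar_normalizer_ne_zero q (hx i)

theorem rpow_sub_two_mul_self {x : ℝ} (hx : 0 < x) (q : ℝ) : x ^ (q - 2) * x = x ^ (q - 1) := by
  rw [← Real.rpow_add_one hx.ne']
  ring_nf

theorem two_rpow_sub_one_eq_two_iff {q : ℝ} : (2 : ℝ) ^ (q - 1) = 2 ↔ q = 2 := by
  conv_lhs => rhs; rw [← Real.rpow_one 2]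
  rw [Real.rpow_right_inj two_pos (by norm_num), sub_eq_iff_eq_add]
  norm_num

theorem Jstar_not_preserve_dependence_general (p q : ℝ) (hp2 : p ≠ 2)
    (hq : q = p / (p - 1)) :
    ¬ LinearIndependent ℝ ![(![0, 1, 1] : Fin 3 → ℝ), ![1, 0, 1], ![1, 1, 2]] ∧
    LinearIndependent ℝ
      ![Jstar q ![0, 1, 1], Jstar q ![1, 0, 1], Jstar q ![1, 1, 2]] := by
  have hq2 : q ≠ 2 := by
    rintro rfl
    rcases eq_or_ne (p - 1) 0 with hp1 | hp1
    · simp [hp1] at hq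
    · rw [eq_div_iff hp1] at hq
      exact hp2 (by linarith)
  refine ⟨(linearIndependent_vecCons_three_iff (2 : ℝ)).not.mpr (not_not.mpr rfl), ?_⟩
  set x : Fin 3 → Fin 3 → ℝ := ![![0, 1, 1], ![1, 0, 1], ![1, 1, 2]]
  have hJ : ![Jstar q ![0, 1, 1], Jstar q ![1, 0, 1], Jstar q ![1, 1, 2]] = Jstar q ∘ x := by
    ext i : 1
    fin_cases i <;> rfl
  have hx : ∀ i, x i ≠ 0 := by
    intro i
    fin_cases i <;> simp [x]
  have hprofile : (fun i j => |x i j| ^ (q - 2) * x i j) =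
      ![![0, 1, 1], ![1, 0, 1], ![1, 1, 2 ^ (q - 1)]] := by
    ext i j
    fin_cases i <;> fin_cases j <;> simp [x, rpow_sub_two_mul_self two_pos]
  rw [hJ, linearIndependent_Jstar_comp_iff q hx, hprofile, linearIndependent_vecCons_three_iff,
    Ne, two_rpow_sub_one_eq_two_iff]
  exact hq2

/-- For `1 < p < ∞`, `p ≠ 2`, `q = p/(p-1)`, the linearly dependent vectors
`a = (0,1,1)`, `b = (1,0,1)`, `c = (1,1,2)` in `ℓ_q³` have linearly independent images under
`J*`. -/
theorem Jstar_not_preserve_dependence (p q : ℝ) (hp1 : 1 < p) (hp2 : p ≠ 2)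
    (hq : q = p / (p - 1)) :
    ¬ LinearIndependent ℝ ![(![0, 1, 1] : Fin 3 → ℝ), ![1, 0, 1], ![1, 1, 2]] ∧
    LinearIndependent ℝ
      ![Jstar q ![0, 1, 1], Jstar q ![1, 0, 1], Jstar q ![1, 1, 2]] :=
  Jstar_not_preserve_dependence_general p q hp2 hq
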